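/- Let ζ = exp(πi/31) ∈ ℂ. Then [14]_ζ [18]_ζ [20]_ζ [22]_ζ [24]_ζ [25]_ζ [26]_ζ [30]_ζ [32]_ζ [34]_ζ = [1]_ζ² [3]_ζ [5]_ζ [6]_ζ [7]_ζ [9]_ζ [11]_ζ [13]_ζ [17]_ζ; equivalently, the quantum dimension of the representation V(Λ_7 + Λ_8) of the simple Lie algebra of type E₈ at ζ, namely ([14]_ζ [18]_ζ [20]_ζ [22]_ζ [24]_ζ [25]_ζ [26]_ζ [30]_ζ [32]_ζ [34]_ζ)/([1]_ζ² [3]_ζ [5]_ζ [6]_ζ [7]_ζ [9]_ζ [11]_ζ [13]_ζ [17]_ζ), equals 1. -/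

import Mathlib

open Complex

/-- `ζ = exp(πi/m)`, a primitive `2m`-th root of unity. -/
noncomputable def zeta (m : ℕ) : ℂ := Complex.exp (Real.pi * Complex.I / m)

/-- The `ζ`-integer `[n]_ζ = (ζ^n - ζ^{-n})/(ζ - ζ⁻¹)` for `ζ = exp(πi/m)`. -/
noncomputable def qint (m : ℕ) (n : ℤ) : ℂ :=
  (zeta m ^ n - zeta m ^ (-n)) / (zeta m - (zeta m)⁻¹)

/-!
Since `ζ^m = -1`, the `ζ`-integers satisfy `[m - n] = [n]` and `[m + n] = -[n]`, the analogues
of `sin (π - x) = sin x` and `sin (π + x) = -sin x` for `[n]_ζ = sin (πn/m) / sin (π/m)`.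
For `m = 31` these match the numerator factors `[14], [18], …, [34]` with the denominator
factors `[17], [13], …, [3]`, up to two signs which cancel. The quotient is then `1` because
`[n]_ζ ≠ 0` whenever `m ∤ n`, `ζ` being a primitive `2m`-th root of unity.
-/

theorem zeta_ne_zero (m : ℕ) : zeta m ≠ 0 :=
  Complex.exp_ne_zero _

theorem isPrimitiveRoot_zeta {m : ℕ} (hm : m ≠ 0) : IsPrimitiveRoot (zeta m) (2 * m) := by
  rw [zeta]
  convert Complex.isPrimitiveRoot_exp (2 * m) (by positivity) using 2
  push_cast
  field_simp

theorem zeta_zpow_self {m : ℕ} (hm : m ≠ 0) : zeta m ^ (m : ℤ) = -1 := by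
  rw [zpow_natCast, zeta, ← Complex.exp_nat_mul]
  convert Complex.exp_pi_mul_I using 2
  field_simp

theorem qint_neg (m : ℕ) (n : ℤ) : qint m (-n) = -qint m n := by
  rw [qint, qint, neg_neg, ← neg_div, neg_sub]

theorem qint_eq_of_add_eq {m : ℕ} (hm : m ≠ 0) {a b : ℤ} (h : a + b = m) :
    qint m a = qint m b := by
  obtain rfl : a = m - b := by omega
  have hz := zeta_ne_zero m
  rw [qint, qint, neg_sub, zpow_sub₀ hz, zpow_sub₀ hz, zeta_zpow_self hm, zpow_neg]
  field_simp
  ring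

theorem qint_eq_neg_of_sub_eq {m : ℕ} (hm : m ≠ 0) {a b : ℤ} (h : a - b = m) :
    qint m a = -qint m b := by
  rw [qint_eq_of_add_eq hm (b := -b) (by omega), qint_neg]

theorem zeta_zpow_sub_zpow_neg_ne_zero {m : ℕ} (hm : m ≠ 0) {n : ℤ}
    (hn : ¬ (m : ℤ) ∣ n) : zeta m ^ n - zeta m ^ (-n) ≠ 0 := by
  intro h
  have hz := zeta_ne_zero m
  have h2n : zeta m ^ (2 * n) = 1 :=
    calc zeta m ^ (2 * n) = zeta m ^ n * zeta m ^ (-n) := by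
          rw [two_mul, zpow_add₀ hz, ← sub_eq_zero.mp h]
      _ = 1 := by rw [← zpow_add₀ hz, add_neg_cancel, zpow_zero]
  rw [(isPrimitiveRoot_zeta hm).zpow_eq_one_iff_dvd] at h2n
  push_cast at h2n
  exact hn (Int.dvd_of_mul_dvd_mul_left two_ne_zero h2n)

theorem qint_ne_zero {m : ℕ} (hm : 2 ≤ m) {n : ℤ} (hn : ¬ (m : ℤ) ∣ n) :
    qint m n ≠ 0 := by
  have hm0 : m ≠ 0 := by omega
  have h1 : ¬ (m : ℤ) ∣ 1 := fun h => by
    have := Int.le_of_dvd one_pos h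
    omega
  have hd := zeta_zpow_sub_zpow_neg_ne_zero hm0 h1
  rw [zpow_one, zpow_neg_one] at hd
  exact div_ne_zero (zeta_zpow_sub_zpow_neg_ne_zero hm0 hn) hd

theorem qdim_E8_Lambda7_Lambda8 :
    qint 31 14 * qint 31 18 * qint 31 20 * qint 31 22 * qint 31 24 * qint 31 25 *
        qint 31 26 * qint 31 30 * qint 31 32 * qint 31 34 =
        qint 31 1 ^ 2 * qint 31 3 * qint 31 5 * qint 31 6 * qint 31 7 * qint 31 9 *
          qint 31 11 * qint 31 13 * qint 31 17 ∧
      qint 31 14 * qint 31 18 * qint 31 20 * qint 31 22 * qint 31 24 * qint 31 25 *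
          qint 31 26 * qint 31 30 * qint 31 32 * qint 31 34 /
        (qint 31 1 ^ 2 * qint 31 3 * qint 31 5 * qint 31 6 * qint 31 7 * qint 31 9 *
          qint 31 11 * qint 31 13 * qint 31 17) = 1 := by
  have reflect (a b : ℤ) (h : a + b = 31) : qint 31 a = qint 31 b :=
    qint_eq_of_add_eq (by norm_num) h
  have shift (a b : ℤ) (h : a - b = 31) : qint 31 a = -qint 31 b :=
    qint_eq_neg_of_sub_eq (by norm_num) h
  have nonzero (n : ℤ) (hn : ¬ (31 : ℤ) ∣ n) : qint 31 n ≠ 0 :=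
    qint_ne_zero (by norm_num) hn
  have numerator : qint 31 14 * qint 31 18 * qint 31 20 * qint 31 22 * qint 31 24 *
      qint 31 25 * qint 31 26 * qint 31 30 * qint 31 32 * qint 31 34 =
      qint 31 1 ^ 2 * qint 31 3 * qint 31 5 * qint 31 6 * qint 31 7 * qint 31 9 *
        qint 31 11 * qint 31 13 * qint 31 17 := by
    rw [reflect 14 17 (by norm_num), reflect 18 13 (by norm_num), reflect 20 11 (by norm_num),
      reflect 22 9 (by norm_num), reflect 24 7 (by norm_num), reflect 25 6 (by norm_num),
      reflect 26 5 (by norm_num), reflect 30 1 (by norm_num), shift 32 1 (by norm_num),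
      shift 34 3 (by norm_num)]
    ring
  refine ⟨numerator, ?_⟩
  rw [numerator, div_self]
  norm_num [nonzero]
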